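/- For every τ ∈ ℍ: 7·E₆(τ) = 2·E₂(τ)·E₄(τ) + πi·δ₄E₄(τ), where δ₄E₄ = ∂_τE₄ + (4/(τ−τ̄))·E₄. -/

import Mathlib

noncomputable section
open Complex Real ComplexConjugate

/-- the divisor power sum `σ_k(n) = Σ_{d∣n} d^k`, as a complex number -/
def sigmaC (k n : ℕ) : ℂ := ∑ d ∈ n.divisors, (d : ℂ) ^ k

/-- the holomorphic part of the weight-two Eisenstein series,
`2(2πi)²·(−1/24 + Σ_{n≥1} σ₁(n)qⁿ)` -/
def E2hol (τ : ℂ) : ℂ :=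
  2 * (2 * π * I) ^ 2 *
    (-(1 / 24) + ∑' n : ℕ, sigmaC 1 (n + 1) * Complex.exp (2 * π * I * τ) ^ (n + 1))

/-- the level-one Eisenstein series: for even `k ≥ 4`,
`E_k(τ) = (2(2πi)^k/(k−1)!)·(−B_k/(2k) + Σ_{n≥1} σ_{k−1}(n)qⁿ)`;
`E_k = 0` for odd `k`; and the non-holomorphic
`E₂(τ) = 2(2πi)²·(−1/(4πi(τ−τ̄)) − 1/24 + Σ_{n≥1} σ₁(n)qⁿ)`. -/
def Eis (k : ℕ) (τ : ℂ) : ℂ :=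
  if k = 2 then
    E2hol τ + 2 * (2 * π * I) ^ 2 * (-(1 / (4 * π * I * (τ - conj τ))))
  else if 4 ≤ k ∧ Even k then
    2 * (2 * π * I) ^ k / (Nat.factorial (k - 1)) *
      (-(bernoulli k : ℂ) / (2 * k) +
        ∑' n : ℕ, sigmaC (k - 1) (n + 1) * Complex.exp (2 * π * I * τ) ^ (n + 1))
  else 0

/-- the Wirtinger derivative `∂_τ E_k`: for `f = g + c/(τ−τ̄)` with `g` holomorphic,
`∂_τ f = g′(τ) − c/(τ−τ̄)²`; for `E₂` the constant is `c = −2πi`, and for `k ≠ 2`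
the series `E_k` is holomorphic. -/
def dEis (k : ℕ) (τ : ℂ) : ℂ :=
  if k = 2 then deriv E2hol τ + 2 * π * I / (τ - conj τ) ^ 2
  else deriv (Eis k) τ

/-- the shifted derivative `δ_k E_k = ∂_τ E_k + (k/(τ−τ̄))·E_k` -/
def deltaEis (k : ℕ) (τ : ℂ) : ℂ := dEis k τ + (k : ℂ) / (τ - conj τ) * Eis k τ


/-!
With `q = e^{2πiτ}`, the series `E₂`, `E₄`, `E₆` are constant multiples of the `q`-series of
`1 - 24 Σ σ₁(n) qⁿ`, `1 + 240 Σ σ₃(n) qⁿ` and `1 - 504 Σ σ₅(n) qⁿ` (plus `-2πi/(τ - τ̄)` for `E₂`),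
and `∂_τ = 2πi · q d/dq` on `q`-series. The non-holomorphic terms cancel, and what is left is
Ramanujan's `q d/dq E₄ = (E₂E₄ - E₆)/3`, i.e. coefficientwise
`240 Σ_{i+j=n} σ₁(i)σ₃(j) = 21σ₅(n) + 10σ₃(n) - σ₁(n) - 30nσ₃(n)`.

This convolution identity is proved elementarily. Its left side is `240 Σ ab³` over the positive
solutions of `ax + by = n`. Such a sum of `F(a, b)` can be split by comparing `x` with `y`, or by
comparing `a` with `b`; for two quartics `g`, `h` with `g - h = 8ab³` the off-diagonal parts of
the two splittings coincide, and the diagonal parts are power sums over the divisors of `n`.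
-/

open Finset PowerSeries Filter Asymptotics ArithmeticFunction
open scoped ArithmeticFunction.sigma

theorem sum_filter_lt_add_sum_filter_gt_add_sum_filter_eq {ι α M : Type*} [LinearOrder α]
    [AddCommMonoid M] (s : Finset ι) (f : ι → M) (u v : ι → α) :
    ∑ i ∈ s.filter (fun i => u i < v i), f i + ∑ i ∈ s.filter (fun i => v i < u i), f i
      + ∑ i ∈ s.filter (fun i => u i = v i), f i = ∑ i ∈ s, f i := by
  have hne := sum_filter_add_sum_filter_not (s.filter fun i => u i ≠ v i) (fun i => u i < v i) f
  have hlt : s.filter (fun i => u i ≠ v i ∧ u i < v i) = s.filter (fun i => u i < v i) :=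
    filter_congr fun i _ => ⟨And.right, fun h => ⟨h.ne, h⟩⟩
  have hgt : s.filter (fun i => u i ≠ v i ∧ ¬u i < v i) = s.filter (fun i => v i < u i) :=
    filter_congr fun i _ => ⟨fun h => lt_of_le_of_ne (not_lt.1 h.2) (Ne.symm h.1),
      fun h => ⟨h.ne', not_lt.2 h.le⟩⟩
  rw [filter_filter, filter_filter, hlt, hgt] at hne
  rw [hne, add_comm, sum_filter_add_sum_filter_not]

def posQuads (n : ℕ) : Finset ((ℕ × ℕ) × (ℕ × ℕ)) :=
  ((Icc 1 n ×ˢ Icc 1 n) ×ˢ (Icc 1 n ×ˢ Icc 1 n)).filter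
    fun t => t.1.1 * t.1.2 + t.2.1 * t.2.2 = n

@[simp]
lemma mem_posQuads {n a x b y : ℕ} :
    ((a, x), (b, y)) ∈ posQuads n ↔ 0 < a ∧ 0 < x ∧ 0 < b ∧ 0 < y ∧ a * x + b * y = n := by
  simp only [posQuads, mem_filter, mem_product, mem_Icc]
  constructor
  · rintro ⟨⟨⟨⟨ha, -⟩, hx, -⟩, ⟨hb, -⟩, hy, -⟩, h⟩
    exact ⟨ha, hx, hb, hy, h⟩
  · rintro ⟨ha, hx, hb, hy, h⟩
    have := Nat.le_mul_of_pos_right a hx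
    have := Nat.le_mul_of_pos_left x ha
    have := Nat.le_mul_of_pos_right b hy
    have := Nat.le_mul_of_pos_left y hb
    exact ⟨⟨⟨⟨ha, by omega⟩, hx, by omega⟩, ⟨hb, by omega⟩, hy, by omega⟩, h⟩

section posQuads

variable {M : Type*} [AddCommMonoid M] (n : ℕ) (F : ℕ → ℕ → M)

theorem sum_posQuads_filter_cofactor_gt :
    ∑ t ∈ (posQuads n).filter (fun t => t.2.2 < t.1.2), F t.1.1 t.2.1 =
      ∑ t ∈ (posQuads n).filter (fun t => t.1.1 < t.2.1), F t.1.1 (t.2.1 - t.1.1) := by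
  refine sum_nbij' (fun t => ((t.1.1, t.1.2 - t.2.2), (t.1.1 + t.2.1, t.2.2)))
    (fun t => ((t.1.1, t.1.2 + t.2.2), (t.2.1 - t.1.1, t.2.2))) ?_ ?_ ?_ ?_ fun _ _ => by simp
  · rintro ⟨⟨a, x⟩, b, y⟩ ht
    simp only [mem_filter, mem_posQuads] at ht ⊢
    obtain ⟨⟨ha, hx, hb, hy, h⟩, hxy⟩ := ht
    obtain ⟨u, rfl⟩ : ∃ u, x = y + u := ⟨x - y, by omega⟩
    refine ⟨⟨ha, by omega, by omega, hy, ?_⟩, by omega⟩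
    rw [← h, Nat.add_sub_cancel_left]; ring
  · rintro ⟨⟨a, x⟩, b, y⟩ ht
    simp only [mem_filter, mem_posQuads] at ht ⊢
    obtain ⟨⟨ha, hx, hb, hy, h⟩, hab⟩ := ht
    obtain ⟨u, rfl⟩ : ∃ u, b = a + u := ⟨b - a, by omega⟩
    refine ⟨⟨ha, by omega, by omega, hy, ?_⟩, by omega⟩
    rw [← h, Nat.add_sub_cancel_left]; ring
  all_goals
    rintro ⟨⟨a, x⟩, b, y⟩ ht
    simp only [mem_filter, mem_posQuads] at ht
    simp only [Prod.mk.injEq, true_and, and_true]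
    omega

theorem sum_posQuads_filter_cofactor_lt :
    ∑ t ∈ (posQuads n).filter (fun t => t.1.2 < t.2.2), F t.1.1 t.2.1 =
      ∑ t ∈ (posQuads n).filter (fun t => t.1.1 < t.2.1), F (t.2.1 - t.1.1) t.1.1 := by
  refine sum_nbij' (fun t => ((t.2.1, t.2.2 - t.1.2), (t.1.1 + t.2.1, t.1.2)))
    (fun t => ((t.2.1 - t.1.1, t.2.2), (t.1.1, t.1.2 + t.2.2))) ?_ ?_ ?_ ?_ fun _ _ => by simp
  · rintro ⟨⟨a, x⟩, b, y⟩ ht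
    simp only [mem_filter, mem_posQuads] at ht ⊢
    obtain ⟨⟨ha, hx, hb, hy, h⟩, hxy⟩ := ht
    obtain ⟨u, rfl⟩ : ∃ u, y = x + u := ⟨y - x, by omega⟩
    refine ⟨⟨hb, by omega, by omega, hx, ?_⟩, by omega⟩
    rw [← h, Nat.add_sub_cancel_left]; ring
  · rintro ⟨⟨a, x⟩, b, y⟩ ht
    simp only [mem_filter, mem_posQuads] at ht ⊢
    obtain ⟨⟨ha, hx, hb, hy, h⟩, hab⟩ := ht
    obtain ⟨u, rfl⟩ : ∃ u, b = a + u := ⟨b - a, by omega⟩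
    refine ⟨⟨by omega, hy, ha, by omega, ?_⟩, by omega⟩
    rw [← h, Nat.add_sub_cancel_left]; ring
  all_goals
    rintro ⟨⟨a, x⟩, b, y⟩ ht
    simp only [mem_filter, mem_posQuads] at ht
    simp only [Prod.mk.injEq, true_and, and_true]
    omega

theorem sum_posQuads_filter_cofactor_eq :
    ∑ t ∈ (posQuads n).filter (fun t => t.2.2 = t.1.2), F t.1.1 t.2.1 =
      ∑ d ∈ n.divisors, ∑ a ∈ Ico 1 d, F a (d - a) := by
  refine Eq.trans ?_ (sum_sigma n.divisors (fun d => Ico 1 d) fun p => F p.2 (p.1 - p.2))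
  refine sum_nbij' (fun t => ⟨t.1.1 + t.2.1, t.1.1⟩)
    (fun p => ((p.2, n / p.1), (p.1 - p.2, n / p.1))) ?_ ?_ ?_ ?_ fun _ _ => by simp
  · rintro ⟨⟨a, x⟩, b, y⟩ ht
    simp only [mem_filter, mem_posQuads] at ht
    obtain ⟨⟨ha, hx, hb, hy, h⟩, rfl⟩ := ht
    simp only [mem_sigma, mem_Ico, Nat.mem_divisors]
    exact ⟨⟨⟨y, by rw [← h]; ring⟩, by rw [← h]; positivity⟩, ha, by omega⟩
  · rintro ⟨d, a⟩ hp
    simp only [mem_sigma, mem_Ico, Nat.mem_divisors] at hp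
    obtain ⟨⟨hdn, hn⟩, ha, had⟩ := hp
    have hq : 0 < n / d := Nat.div_pos (Nat.le_of_dvd (Nat.pos_of_ne_zero hn) hdn) (by omega)
    simp only [mem_filter, mem_posQuads]
    refine ⟨⟨ha, hq, by omega, hq, ?_⟩, trivial⟩
    rw [← add_mul, Nat.add_sub_cancel' had.le, Nat.mul_div_cancel' hdn]
  · rintro ⟨⟨a, x⟩, b, y⟩ ht
    simp only [mem_filter, mem_posQuads] at ht
    obtain ⟨⟨ha, hx, hb, hy, h⟩, rfl⟩ := ht
    have hn : n / (a + b) = y := by rw [← h, ← add_mul, Nat.mul_div_cancel_left _ (by omega)]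
    simp [hn]
  · rintro ⟨d, a⟩ hp
    simp only [mem_sigma, mem_Ico] at hp
    simp [Nat.add_sub_cancel' hp.2.2.le]

theorem sum_posQuads_split_by_cofactors :
    ∑ t ∈ posQuads n, F t.1.1 t.2.1 =
      ∑ t ∈ (posQuads n).filter (fun t => t.1.1 < t.2.1),
          (F t.1.1 (t.2.1 - t.1.1) + F (t.2.1 - t.1.1) t.1.1)
        + ∑ d ∈ n.divisors, ∑ a ∈ Ico 1 d, F a (d - a) := by
  rw [← sum_filter_lt_add_sum_filter_gt_add_sum_filter_eq _ _ (fun t => t.2.2) (fun t => t.1.2),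
    sum_posQuads_filter_cofactor_gt, sum_posQuads_filter_cofactor_lt,
    sum_posQuads_filter_cofactor_eq, sum_add_distrib]

theorem sum_posQuads_filter_factor_eq :
    ∑ t ∈ (posQuads n).filter (fun t => t.1.1 = t.2.1), F t.1.1 t.2.1 =
      ∑ d ∈ n.divisors, (n / d - 1) • F d d := by
  have hfib : ∀ d ∈ n.divisors, (n / d - 1) • F d d = ∑ x ∈ Ico 1 (n / d), F d d := by simp
  rw [sum_congr rfl hfib, ← sum_sigma n.divisors (fun d => Ico 1 (n / d)) fun p => F p.1 p.1]
  refine sum_nbij' (fun t => ⟨t.1.1, t.1.2⟩) (fun p => ((p.1, p.2), (p.1, n / p.1 - p.2)))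
    ?_ ?_ ?_ (fun _ _ => rfl) ?_
  · rintro ⟨⟨a, x⟩, b, y⟩ ht
    simp only [mem_filter, mem_posQuads] at ht
    obtain ⟨⟨ha, hx, hb, hy, h⟩, rfl⟩ := ht
    have hq : n / a = x + y := by rw [← h, ← mul_add, Nat.mul_div_cancel_left _ ha]
    simp only [mem_sigma, mem_Ico, Nat.mem_divisors, hq]
    exact ⟨⟨⟨x + y, by rw [← h, mul_add]⟩, by rw [← h]; positivity⟩, hx, by omega⟩
  · rintro ⟨d, x⟩ hp
    simp only [mem_sigma, mem_Ico, Nat.mem_divisors] at hp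
    obtain ⟨⟨hdn, hn⟩, hx, hxd⟩ := hp
    have hd := Nat.pos_of_dvd_of_pos hdn (Nat.pos_of_ne_zero hn)
    simp only [mem_filter, mem_posQuads]
    refine ⟨⟨hd, hx, hd, by omega, ?_⟩, trivial⟩
    rw [← mul_add, Nat.add_sub_cancel' hxd.le, Nat.mul_div_cancel' hdn]
  · rintro ⟨⟨a, x⟩, b, y⟩ ht
    simp only [mem_filter, mem_posQuads] at ht
    obtain ⟨⟨ha, hx, hb, hy, h⟩, rfl⟩ := ht
    have hq : n / a = x + y := by rw [← h, ← mul_add, Nat.mul_div_cancel_left _ ha]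
    simp [hq]
  · rintro ⟨⟨a, x⟩, b, y⟩ ht
    simp only [mem_filter, mem_posQuads] at ht
    obtain ⟨-, rfl⟩ := ht
    rfl

theorem sum_posQuads_split_by_factors :
    ∑ t ∈ posQuads n, F t.1.1 t.2.1 =
      ∑ t ∈ (posQuads n).filter (fun t => t.1.1 < t.2.1), (F t.1.1 t.2.1 + F t.2.1 t.1.1)
        + ∑ d ∈ n.divisors, (n / d - 1) • F d d := by
  have hswap : ∑ t ∈ (posQuads n).filter (fun t => t.2.1 < t.1.1), F t.1.1 t.2.1 =
      ∑ t ∈ (posQuads n).filter (fun t => t.1.1 < t.2.1), F t.2.1 t.1.1 := by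
    refine sum_nbij' Prod.swap Prod.swap ?_ ?_ (fun _ _ => rfl) (fun _ _ => rfl) (fun _ _ => rfl)
    all_goals
      rintro ⟨⟨a, x⟩, b, y⟩ ht
      simp only [mem_filter, mem_posQuads, Prod.swap_prod_mk] at ht ⊢
      obtain ⟨⟨ha, hx, hb, hy, h⟩, hab⟩ := ht
      exact ⟨⟨hb, hy, ha, hx, by rw [← h, add_comm]⟩, hab⟩
  rw [← sum_filter_lt_add_sum_filter_gt_add_sum_filter_eq _ _ (fun t => t.1.1) (fun t => t.2.1),
    hswap, sum_posQuads_filter_factor_eq, sum_add_distrib]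

end posQuads

theorem sum_posQuads_pow_mul_pow (n k l : ℕ) :
    ∑ t ∈ posQuads n, t.1.1 ^ k * t.2.1 ^ l = ∑ x ∈ antidiagonal n, σ k x.1 * σ l x.2 := by
  simp_rw [sigma_apply, sum_mul_sum, ← sum_product']
  refine Eq.trans ?_ (sum_sigma (antidiagonal n) (fun x => x.1.divisors ×ˢ x.2.divisors)
    fun p => p.2.1 ^ k * p.2.2 ^ l)
  refine sum_nbij' (fun t => ⟨(t.1.1 * t.1.2, t.2.1 * t.2.2), (t.1.1, t.2.1)⟩)
    (fun p => ((p.2.1, p.1.1 / p.2.1), (p.2.2, p.1.2 / p.2.2))) ?_ ?_ ?_ ?_ (fun _ _ => rfl)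
  · rintro ⟨⟨a, x⟩, b, y⟩ ht
    rw [mem_posQuads] at ht
    obtain ⟨ha, hx, hb, hy, h⟩ := ht
    simp only [mem_sigma, HasAntidiagonal.mem_antidiagonal, mem_product, Nat.mem_divisors]
    exact ⟨h, ⟨dvd_mul_right a x, by positivity⟩, dvd_mul_right b y, by positivity⟩
  · rintro ⟨⟨i, j⟩, a, b⟩ hp
    simp only [mem_sigma, HasAntidiagonal.mem_antidiagonal, mem_product, Nat.mem_divisors] at hp
    obtain ⟨hij, ⟨hai, hi⟩, hbj, hj⟩ := hp
    replace hi := Nat.pos_of_ne_zero hi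
    replace hj := Nat.pos_of_ne_zero hj
    have ha := Nat.pos_of_dvd_of_pos hai hi
    have hb := Nat.pos_of_dvd_of_pos hbj hj
    rw [mem_posQuads, Nat.mul_div_cancel' hai, Nat.mul_div_cancel' hbj]
    exact ⟨ha, Nat.div_pos (Nat.le_of_dvd hi hai) ha, hb, Nat.div_pos (Nat.le_of_dvd hj hbj) hb,
      hij⟩
  · rintro ⟨⟨a, x⟩, b, y⟩ ht
    rw [mem_posQuads] at ht
    simp [Nat.mul_div_cancel_left x ht.1, Nat.mul_div_cancel_left y ht.2.2.1]
  · rintro ⟨⟨i, j⟩, a, b⟩ hp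
    simp only [mem_sigma, HasAntidiagonal.mem_antidiagonal, mem_product, Nat.mem_divisors] at hp
    simp [Nat.mul_div_cancel' hp.2.1.1, Nat.mul_div_cancel' hp.2.2.1]

theorem sum_Ico_quartic (d : ℕ) :
    30 * ∑ a ∈ Ico 1 d, (2 * ((d - a : ℕ) : ℤ) ^ 4 + 4 * a * ((d - a : ℕ) : ℤ) ^ 3
      + 3 * (a : ℤ) ^ 2 * ((d - a : ℕ) : ℤ) ^ 2)
      = 21 * (d : ℤ) ^ 5 - 30 * d ^ 4 + 10 * d ^ 3 - d := by
  rcases Nat.eq_zero_or_pos d with rfl | hd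
  · simp
  set D : ℤ := (d : ℤ)
  -- the right side is the summand expanded in powers of `a`, summed by Faulhaber's formulas
  have htel : ∀ m : ℕ, 30 * ∑ a ∈ range m,
      (2 * (D - a) ^ 4 + 4 * a * (D - a) ^ 3 + 3 * (a : ℤ) ^ 2 * (D - a) ^ 2) =
      6 * (m : ℤ) ^ 5 - 15 * m ^ 4 + 10 * m ^ 3 - m - 15 * D * (m ^ 4 - 2 * m ^ 3 + m ^ 2)
        + 15 * D ^ 2 * (2 * m ^ 3 - 3 * m ^ 2 + m) - 60 * D ^ 3 * (m ^ 2 - m) + 60 * D ^ 4 * m := by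
    intro m
    induction m with
    | zero => simp
    | succ m ih => rw [sum_range_succ, mul_add, ih]; push_cast; ring
  have hIco : ∑ a ∈ Ico 1 d, (2 * ((d - a : ℕ) : ℤ) ^ 4 + 4 * a * ((d - a : ℕ) : ℤ) ^ 3
      + 3 * (a : ℤ) ^ 2 * ((d - a : ℕ) : ℤ) ^ 2) = ∑ a ∈ Ico 1 d,
      (2 * (D - a) ^ 4 + 4 * a * (D - a) ^ 3 + 3 * (a : ℤ) ^ 2 * (D - a) ^ 2) :=
    sum_congr rfl fun a ha => by rw [Nat.cast_sub (mem_Ico.1 ha).2.le]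
  have := htel d
  rw [sum_range_eq_add_Ico _ hd] at this
  rw [hIco]
  linear_combination this

theorem sigma_one_convolution_sigma_three (n : ℕ) :
    240 * ∑ x ∈ antidiagonal n, σ 1 x.1 * σ 3 x.2 + σ 1 n + 30 * n * σ 3 n =
      21 * σ 5 n + 10 * σ 3 n := by
  -- `g - h = 8ab³`, and the off-diagonal parts of the two splittings agree because
  -- `g a (b - a) + g (b - a) a = h a b + h b a`.
  let g : ℕ → ℕ → ℤ := fun a b => 2 * b ^ 4 + 4 * a * b ^ 3 + 3 * a ^ 2 * b ^ 2
  let h : ℕ → ℕ → ℤ := fun a b => 2 * b ^ 4 - 4 * a * b ^ 3 + 3 * a ^ 2 * b ^ 2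
  have hoff : ∑ t ∈ (posQuads n).filter (fun t => t.1.1 < t.2.1),
        (g t.1.1 (t.2.1 - t.1.1) + g (t.2.1 - t.1.1) t.1.1) =
      ∑ t ∈ (posQuads n).filter (fun t => t.1.1 < t.2.1), (h t.1.1 t.2.1 + h t.2.1 t.1.1) := by
    refine sum_congr rfl fun t ht => ?_
    simp only [g, h, Nat.cast_sub (mem_filter.1 ht).2.le]
    ring
  have hsplit : 8 * ∑ t ∈ posQuads n, ((t.1.1 ^ 1 * t.2.1 ^ 3 : ℕ) : ℤ) =
      ∑ d ∈ n.divisors, ∑ a ∈ Ico 1 d, g a (d - a) - ∑ d ∈ n.divisors, (n / d - 1) • h d d := by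
    have h8 : ∀ t ∈ posQuads n,
        8 * ((t.1.1 ^ 1 * t.2.1 ^ 3 : ℕ) : ℤ) = g t.1.1 t.2.1 - h t.1.1 t.2.1 := fun t _ => by
      simp only [g, h]; push_cast; ring
    rw [mul_sum, sum_congr rfl h8, sum_sub_distrib, sum_posQuads_split_by_cofactors,
      sum_posQuads_split_by_factors, hoff]
    abel
  have hdiag_g : 30 * ∑ d ∈ n.divisors, ∑ a ∈ Ico 1 d, g a (d - a) =
      21 * (σ 5 n : ℤ) - 30 * σ 4 n + 10 * σ 3 n - σ 1 n := by
    rw [mul_sum, sum_congr rfl fun d _ => sum_Ico_quartic d]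
    simp only [sigma_apply, pow_one, sum_sub_distrib, sum_add_distrib]
    push_cast
    simp only [mul_sum]
  have hdiag_h : ∑ d ∈ n.divisors, (n / d - 1) • h d d = n * (σ 3 n : ℤ) - σ 4 n := by
    simp only [sigma_apply]
    push_cast
    rw [mul_sum, ← sum_sub_distrib]
    refine sum_congr rfl fun d hd => ?_
    obtain ⟨hdn, hn⟩ := Nat.mem_divisors.1 hd
    have hq : 1 ≤ n / d := Nat.div_pos (Nat.le_of_dvd (Nat.pos_of_ne_zero hn) hdn)
      (Nat.pos_of_dvd_of_pos hdn (Nat.pos_of_ne_zero hn))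
    have hnd : ((n / d : ℕ) : ℤ) * d = n := by exact_mod_cast Nat.div_mul_cancel hdn
    rw [nsmul_eq_mul, Nat.cast_sub hq]
    linear_combination (d : ℤ) ^ 3 * hnd
  rw [← sum_posQuads_pow_mul_pow]
  zify
  push_cast at hsplit ⊢
  linear_combination 30 * hsplit + hdiag_g - 30 * hdiag_h

def qSeries (f : ℂ⟦X⟧) (τ : ℂ) : ℂ := ∑' n, coeff n f * cexp (2 * π * I * τ) ^ n

def HasPolyGrowth (f : ℂ⟦X⟧) : Prop :=
  ∃ k : ℕ, (fun n => coeff n f) =O[atTop] fun n : ℕ => (n : ℝ) ^ k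

def eulerOp (f : ℂ⟦X⟧) : ℂ⟦X⟧ := mk fun n => n * coeff n f

def sigmaSeries (k : ℕ) : ℂ⟦X⟧ := mk (sigmaC k)

lemma norm_cexp_two_pi_I_mul (τ : ℂ) : ‖cexp (2 * π * I * τ)‖ = Real.exp (-(2 * π * τ.im)) := by
  rw [Complex.norm_exp]
  congr 1
  simp [Complex.mul_re, Complex.mul_im]

lemma norm_cexp_two_pi_I_mul_le {z w : ℂ} (h : w.im ≤ z.im) :
    ‖cexp (2 * π * I * z)‖ ≤ ‖cexp (2 * π * I * w)‖ := by
  rw [norm_cexp_two_pi_I_mul, norm_cexp_two_pi_I_mul, Real.exp_le_exp]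
  have := Real.pi_pos
  nlinarith

lemma isBigO_natCast_pow_pow {k m : ℕ} (h : k ≤ m) :
    (fun n : ℕ => (n : ℝ) ^ k) =O[atTop] fun n : ℕ => (n : ℝ) ^ m :=
  IsBigO.pow_of_le_right (f := fun n : ℕ => (n : ℝ))
    ((eventually_ge_atTop 1).mono fun n hn => by simpa using hn) h

namespace HasPolyGrowth

variable {f g : ℂ⟦X⟧}

lemma add (hf : HasPolyGrowth f) (hg : HasPolyGrowth g) : HasPolyGrowth (f + g) := by
  obtain ⟨k, hk⟩ := hf
  obtain ⟨m, hm⟩ := hg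
  exact ⟨max k m, (hk.trans (isBigO_natCast_pow_pow (le_max_left k m))).add
    (hm.trans (isBigO_natCast_pow_pow (le_max_right k m)))⟩

lemma sub (hf : HasPolyGrowth f) (hg : HasPolyGrowth g) : HasPolyGrowth (f - g) := by
  obtain ⟨k, hk⟩ := hf
  obtain ⟨m, hm⟩ := hg
  exact ⟨max k m, (hk.trans (isBigO_natCast_pow_pow (le_max_left k m))).sub
    (hm.trans (isBigO_natCast_pow_pow (le_max_right k m)))⟩

lemma const_smul (hf : HasPolyGrowth f) (c : ℂ) : HasPolyGrowth (c • f) := by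
  obtain ⟨k, hk⟩ := hf
  exact ⟨k, by simpa using hk.const_mul_left c⟩

lemma eulerOp (hf : HasPolyGrowth f) : HasPolyGrowth (eulerOp f) := by
  obtain ⟨k, hk⟩ := hf
  refine ⟨k + 1, ?_⟩
  have hn : (fun n : ℕ => (n : ℂ)) =O[atTop] fun n : ℕ => (n : ℝ) :=
    isBigO_of_le atTop fun n => by simp
  simpa only [_root_.eulerOp, coeff_mk, pow_succ'] using hn.mul hk

lemma summable_norm (hf : HasPolyGrowth f) {τ : ℂ} (hτ : 0 < τ.im) :
    Summable fun n => ‖coeff n f * cexp (2 * π * I * τ) ^ n‖ := by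
  obtain ⟨k, hk⟩ := hf
  exact summable_norm_mul_geometric_of_norm_lt_one' (k := k)
    (UpperHalfPlane.norm_exp_two_pi_I_lt_one ⟨τ, hτ⟩)
    (hk.trans (isBigO_of_le atTop fun n => by simp))

end HasPolyGrowth

lemma hasPolyGrowth_one : HasPolyGrowth 1 :=
  ⟨0, IsBigO.of_bound 1 <| eventually_atTop.2 ⟨1, fun n hn => by
    simp [coeff_one, Nat.one_le_iff_ne_zero.1 hn]⟩⟩

lemma sigmaC_eq_sigma (k n : ℕ) : sigmaC k n = σ k n := by
  simp [sigmaC, sigma_apply]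

lemma hasPolyGrowth_sigmaSeries (k : ℕ) : HasPolyGrowth (sigmaSeries k) :=
  ⟨k + 1, isBigO_of_le atTop fun n => by
    simp only [sigmaSeries, coeff_mk, sigmaC_eq_sigma, Complex.norm_natCast, norm_pow,
      Real.norm_natCast]
    exact_mod_cast sigma_le_pow_succ k n⟩

section qSeries

variable {f g : ℂ⟦X⟧} {τ : ℂ}

lemma qSeries_add (hf : HasPolyGrowth f) (hg : HasPolyGrowth g) (hτ : 0 < τ.im) :
    qSeries (f + g) τ = qSeries f τ + qSeries g τ := by
  simp only [qSeries, map_add, add_mul]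
  exact (hf.summable_norm hτ).of_norm.tsum_add (hg.summable_norm hτ).of_norm

lemma qSeries_sub (hf : HasPolyGrowth f) (hg : HasPolyGrowth g) (hτ : 0 < τ.im) :
    qSeries (f - g) τ = qSeries f τ - qSeries g τ := by
  simp only [qSeries, map_sub, sub_mul]
  exact (hf.summable_norm hτ).of_norm.tsum_sub (hg.summable_norm hτ).of_norm

lemma qSeries_smul (c : ℂ) (f : ℂ⟦X⟧) (τ : ℂ) : qSeries (c • f) τ = c * qSeries f τ := by
  simp only [qSeries, map_smul, smul_eq_mul, mul_assoc, tsum_mul_left]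

lemma qSeries_one (τ : ℂ) : qSeries 1 τ = 1 := by
  rw [qSeries, tsum_eq_single 0 fun n hn => by simp [coeff_one, hn]]
  simp

lemma qSeries_mul (hf : HasPolyGrowth f) (hg : HasPolyGrowth g) (hτ : 0 < τ.im) :
    qSeries (f * g) τ = qSeries f τ * qSeries g τ := by
  rw [qSeries, qSeries, qSeries, tsum_mul_tsum_eq_tsum_sum_antidiagonal_of_summable_norm
    (hf.summable_norm hτ) (hg.summable_norm hτ)]
  refine tsum_congr fun n => ?_
  rw [coeff_mul, Finset.sum_mul]
  refine Finset.sum_congr rfl fun x hx => ?_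
  rw [← Finset.HasAntidiagonal.mem_antidiagonal.1 hx, pow_add]
  ring

lemma qSeries_sigmaSeries (k : ℕ) (hτ : 0 < τ.im) :
    qSeries (sigmaSeries k) τ = ∑' n : ℕ, sigmaC k (n + 1) * cexp (2 * π * I * τ) ^ (n + 1) := by
  rw [qSeries, ((hasPolyGrowth_sigmaSeries k).summable_norm hτ).of_norm.tsum_eq_zero_add]
  simp [sigmaSeries, sigmaC]

lemma hasDerivAt_cexp_two_pi_I_mul_pow (n : ℕ) (z : ℂ) :
    HasDerivAt (fun z => cexp (2 * π * I * z) ^ n)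
      (2 * π * I * n * cexp (2 * π * I * z) ^ n) z := by
  have hfun : (fun z => cexp (2 * π * I * z) ^ n) = fun z => cexp (n * (2 * π * I) * z) :=
    funext fun z => by rw [← Complex.exp_nat_mul]; ring_nf
  rw [hfun]
  refine (((hasDerivAt_id z).const_mul _).cexp).congr_deriv ?_
  rw [← Complex.exp_nat_mul, id]
  ring_nf

lemma hasDerivAt_qSeries (hf : HasPolyGrowth f) (hτ : 0 < τ.im) :
    HasDerivAt (qSeries f) (2 * π * I * qSeries (eulerOp f) τ) τ := by
  let w : ℂ := (τ.im / 2 : ℝ) * I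
  let U : Set ℂ := {z | w.im < z.im}
  have hτU : τ ∈ U := by
    change w.im < τ.im
    simp only [w, mul_im, ofReal_re, I_im, ofReal_im, I_re]
    linarith
  have hderiv : ∀ n, ∀ z ∈ U, HasDerivAt (fun z => coeff n f * cexp (2 * π * I * z) ^ n)
      (coeff n f * (2 * π * I * n * cexp (2 * π * I * z) ^ n)) z :=
    fun n z _ => (hasDerivAt_cexp_two_pi_I_mul_pow n z).const_mul _
  have hbound : ∀ n, ∀ z ∈ U, ‖coeff n f * (2 * π * I * n * cexp (2 * π * I * z) ^ n)‖ ≤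
      2 * π * ‖coeff n (eulerOp f) * cexp (2 * π * I * w) ^ n‖ := by
    intro n z hz
    have hq := pow_le_pow_left₀ (norm_nonneg _) (norm_cexp_two_pi_I_mul_le (le_of_lt hz)) n
    simp only [eulerOp, coeff_mk, norm_mul, norm_pow, Complex.norm_natCast, Complex.norm_ofNat,
      Complex.norm_real, Complex.norm_I, Real.norm_eq_abs, abs_of_pos Real.pi_pos]
    calc _ = 2 * π * (n * ‖coeff n f‖) * ‖cexp (2 * π * I * z)‖ ^ n := by ring
      _ ≤ 2 * π * (n * ‖coeff n f‖) * ‖cexp (2 * π * I * w)‖ ^ n := by gcongr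
      _ = _ := by ring
  have hsum := (hf.eulerOp.summable_norm (τ := w) (by simp [w]; positivity)).mul_left (2 * π)
  refine (hasDerivAt_tsum_of_isPreconnected hsum
    (isOpen_lt continuous_const Complex.continuous_im) (convex_halfSpace_im_gt w.im).isPreconnected
    hderiv hbound hτU (hf.summable_norm hτ).of_norm hτU).congr_deriv ?_
  rw [qSeries, ← tsum_mul_left]
  exact tsum_congr fun n => by simp only [eulerOp, coeff_mk]; ring

end qSeries

def E2Series : ℂ⟦X⟧ := 1 - (24 : ℂ) • sigmaSeries 1

def E4Series : ℂ⟦X⟧ := 1 + (240 : ℂ) • sigmaSeries 3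

def E6Series : ℂ⟦X⟧ := 1 - (504 : ℂ) • sigmaSeries 5

lemma hasPolyGrowth_E2Series : HasPolyGrowth E2Series :=
  hasPolyGrowth_one.sub ((hasPolyGrowth_sigmaSeries 1).const_smul _)

lemma hasPolyGrowth_E4Series : HasPolyGrowth E4Series :=
  hasPolyGrowth_one.add ((hasPolyGrowth_sigmaSeries 3).const_smul _)

lemma hasPolyGrowth_E6Series : HasPolyGrowth E6Series :=
  hasPolyGrowth_one.sub ((hasPolyGrowth_sigmaSeries 5).const_smul _)

theorem E2Series_mul_E4Series_sub_E6Series :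
    E2Series * E4Series - E6Series = (3 : ℂ) • eulerOp E4Series := by
  have hexpand : E2Series * E4Series - E6Series = (240 : ℂ) • sigmaSeries 3
      - (24 : ℂ) • sigmaSeries 1 - (5760 : ℂ) • (sigmaSeries 1 * sigmaSeries 3)
      + (504 : ℂ) • sigmaSeries 5 := by
    simp only [E2Series, E4Series, E6Series, sub_mul, mul_add, one_mul, mul_one,
      smul_mul_assoc, mul_smul_comm]
    module
  ext n
  have hconv : (240 : ℂ) * ∑ x ∈ antidiagonal n, sigmaC 1 x.1 * sigmaC 3 x.2 + sigmaC 1 n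
      + 30 * n * sigmaC 3 n = 21 * sigmaC 5 n + 10 * sigmaC 3 n := by
    simp only [sigmaC_eq_sigma]
    exact_mod_cast sigma_one_convolution_sigma_three n
  have hn : (n : ℂ) * coeff n 1 = 0 := by
    rcases n with _ | n <;> simp [coeff_one]
  rw [hexpand]
  simp only [map_add, map_sub, map_smul, coeff_mul, eulerOp, E4Series, sigmaSeries, coeff_mk,
    smul_eq_mul]
  linear_combination (-24 : ℂ) * hconv - 3 * hn

lemma qSeries_E2Series_mul_qSeries_E4Series {τ : ℂ} (hτ : 0 < τ.im) :
    qSeries E2Series τ * qSeries E4Series τ =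
      qSeries E6Series τ + 3 * qSeries (eulerOp E4Series) τ := by
  rw [← qSeries_mul hasPolyGrowth_E2Series hasPolyGrowth_E4Series hτ,
    ← sub_add_cancel (E2Series * E4Series) E6Series, E2Series_mul_E4Series_sub_E6Series,
    add_comm, qSeries_add hasPolyGrowth_E6Series (hasPolyGrowth_E4Series.eulerOp.const_smul 3) hτ,
    qSeries_smul]

theorem bernoulli_four : bernoulli 4 = -1 / 30 := by
  rw [bernoulli_eq_bernoulli'_of_ne_one (by norm_num), bernoulli'_four]

theorem bernoulli_six : bernoulli 6 = 1 / 42 := by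
  rw [bernoulli_eq_bernoulli'_of_ne_one (by norm_num), bernoulli'_def]
  norm_num [Finset.sum_range_succ, bernoulli'_four, Nat.choose,
    bernoulli'_eq_zero_of_odd (show Odd 5 by decide)]

section Eisenstein

variable {τ : ℂ}

lemma E2hol_eq (hτ : 0 < τ.im) : E2hol τ = -(2 * π * I) ^ 2 / 12 * qSeries E2Series τ := by
  rw [E2hol, E2Series,
    qSeries_sub hasPolyGrowth_one ((hasPolyGrowth_sigmaSeries 1).const_smul _) hτ,
    qSeries_one, qSeries_smul, qSeries_sigmaSeries 1 hτ]
  ring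

lemma Eis_two_eq (hτ : 0 < τ.im) :
    Eis 2 τ = -(2 * π * I) ^ 2 / 12 * qSeries E2Series τ - 2 * π * I / (τ - conj τ) := by
  have hπ : (π : ℂ) ≠ 0 := Complex.ofReal_ne_zero.2 Real.pi_ne_zero
  rw [Eis, if_pos rfl, E2hol_eq hτ]
  field_simp
  ring

lemma Eis_four_eq (hτ : 0 < τ.im) : Eis 4 τ = (2 * π * I) ^ 4 / 720 * qSeries E4Series τ := by
  rw [Eis, E4Series,
    qSeries_add hasPolyGrowth_one ((hasPolyGrowth_sigmaSeries 3).const_smul _) hτ,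
    qSeries_one, qSeries_smul, qSeries_sigmaSeries 3 hτ, if_neg (by norm_num),
    if_pos ⟨le_rfl, by decide⟩, bernoulli_four, show Nat.factorial (4 - 1) = 6 from rfl]
  push_cast
  ring

lemma Eis_six_eq (hτ : 0 < τ.im) : Eis 6 τ = -(2 * π * I) ^ 6 / 30240 * qSeries E6Series τ := by
  rw [Eis, E6Series,
    qSeries_sub hasPolyGrowth_one ((hasPolyGrowth_sigmaSeries 5).const_smul _) hτ,
    qSeries_one, qSeries_smul, qSeries_sigmaSeries 5 hτ, if_neg (by norm_num),
    if_pos ⟨by norm_num, by decide⟩, bernoulli_six, show Nat.factorial (6 - 1) = 120 from rfl]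
  push_cast
  ring

lemma hasDerivAt_Eis_four (hτ : 0 < τ.im) :
    HasDerivAt (Eis 4) ((2 * π * I) ^ 4 / 720 * (2 * π * I * qSeries (eulerOp E4Series) τ)) τ :=
  ((hasDerivAt_qSeries hasPolyGrowth_E4Series hτ).const_mul _).congr_of_eventuallyEq <|
    ((isOpen_lt continuous_const Complex.continuous_im).eventually_mem hτ).mono
      fun _ hz => Eis_four_eq hz

end Eisenstein

/-- For `τ` in the upper half-plane, `7·E₆(τ) = 2·E₂(τ)·E₄(τ) + πi·δ₄E₄(τ)`. -/
theorem seven_E6 (τ : ℂ) (hτ : 0 < τ.im) :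
    7 * Eis 6 τ = 2 * Eis 2 τ * Eis 4 τ + π * I * deltaEis 4 τ := by
  have hδ : deltaEis 4 τ = deriv (Eis 4) τ + 4 / (τ - conj τ) * Eis 4 τ := by
    simp [deltaEis, dEis]
  rw [hδ, (hasDerivAt_Eis_four hτ).deriv, Eis_two_eq hτ, Eis_four_eq hτ, Eis_six_eq hτ]
  linear_combination (2 * π * I) ^ 6 / 4320 * qSeries_E2Series_mul_qSeries_E4Series hτ
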